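/- arXiv:2312.03261 — 2 statements merged into one kernel-verified Lean document; each statement's English description precedes it below -/
import Mathlib

section
/- For complex numbers z and ν with Re(z) > 0 and Re(z - ν) > 0, the Mellin transform of x ↦ x^{-ν} Γ(ν, x) equals Γ(z)/(z - ν), i.e., ∫₀^∞ x^{-ν} Γ(ν, x) x^{z-1} dx = Γ(z)/(z - ν). -/
/-- Upper incomplete gamma function `Γ(a, x) = ∫_x^∞ t^(a-1) e^(-t) dt`,
realized as an integral along the ray `x + t`, `t ∈ (0, ∞)`. -/
noncomputable def uGamma (a x : ℂ) : ℂ :=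
  ∫ t in Set.Ioi (0:ℝ), (x + (t:ℂ)) ^ (a - 1) * Complex.exp (-(x + (t:ℂ)))

/-!
Shifting and rescaling the defining integral, `t = x u`, gives
`x ^ (-ν) * Γ(ν, x) = ∫₁^∞ u ^ (ν - 1) e ^ (-u x) du`. The resulting double integral converges
absolutely when `0 < re z` and `0 < re (z - ν)`, so the order of integration may be exchanged:
the inner integral is `∫₀^∞ x ^ (z - 1) e ^ (-u x) dx = Γ(z) u ^ (-z)`, and
`∫₁^∞ u ^ (ν - z - 1) du = 1 / (z - ν)`.
-/

open MeasureTheory Set Complex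

lemma setIntegral_Ioi_comp_const_add {E : Type*} [NormedAddCommGroup E] [NormedSpace ℝ E]
    (f : ℝ → E) (a c : ℝ) : ∫ t in Ioi c, f (a + t) = ∫ t in Ioi (a + c), f t := by
  simpa [preimage_const_add_Ioi] using
    (measurePreserving_add_left volume a).setIntegral_preimage_emb
      (MeasurableEquiv.addLeft a).measurableEmbedding f (Ioi (a + c))

lemma cpow_neg_mul_self_mul_cpow_sub_one {x : ℂ} (hx : x ≠ 0) (ν : ℂ) :
    x ^ (-ν) * x * x ^ (ν - 1) = 1 := by
  conv_lhs => enter [1, 2]; rw [← cpow_one x]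
  rw [← cpow_add _ _ hx, ← cpow_add _ _ hx, show -ν + 1 + (ν - 1) = 0 by ring, cpow_zero]

lemma cpow_neg_mul_uGamma (ν : ℂ) {x : ℝ} (hx : 0 < x) :
    (x : ℂ) ^ (-ν) * uGamma ν x = ∫ u in Ioi (1 : ℝ), (u : ℂ) ^ (ν - 1) * cexp (-(u * x)) := by
  set g : ℝ → ℂ := fun t => (t : ℂ) ^ (ν - 1) * cexp (-t)
  have hshift : uGamma ν x = ∫ t in Ioi x, g t := by
    have h := setIntegral_Ioi_comp_const_add g x 0
    rw [add_zero] at h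
    rw [← h, uGamma]
    simp only [g, ofReal_add]
  have hscale : ∫ t in Ioi x, g t = x • ∫ u in Ioi (1 : ℝ), g (x * u) := by
    simpa using (integral_comp_mul_left_Ioi' g 1 hx).symm
  rw [hshift, hscale, real_smul, ← mul_assoc, ← integral_const_mul]
  refine setIntegral_congr_fun measurableSet_Ioi fun u hu => ?_
  simp only [g, ofReal_mul]
  rw [mul_cpow_ofReal_nonneg hx.le (zero_lt_one.trans hu).le, mul_comm (x : ℂ) u]
  linear_combination ((u : ℂ) ^ (ν - 1) * cexp (-(u * x))) *
    cpow_neg_mul_self_mul_cpow_sub_one (ofReal_ne_zero.mpr hx.ne') ν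

lemma integrableOn_cpow_mul_exp_neg_mul {z : ℂ} (hz : 0 < z.re) {r : ℝ} (hr : 0 < r) :
    IntegrableOn (fun x : ℝ => (x : ℂ) ^ (z - 1) * cexp (-(r * x))) (Ioi 0) := by
  refine (integrableOn_rpow_mul_exp_neg_mul_rpow (s := z.re - 1) (by linarith) one_pos hr).mono'
    (by fun_prop) ?_
  filter_upwards [ae_restrict_mem measurableSet_Ioi] with x hx
  rw [norm_mul, norm_cpow_eq_rpow_re_of_pos hx, norm_exp]
  simp

noncomputable def uGammaMellinKernel (z ν : ℂ) (x u : ℝ) : ℂ :=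
  (u : ℂ) ^ (ν - 1) * ((x : ℂ) ^ (z - 1) * cexp (-(u * x)))

section uGammaMellinKernel

variable {z ν : ℂ} {u : ℝ}

lemma integral_uGammaMellinKernel (hz : 0 < z.re) (hu : 0 < u) :
    ∫ x in Ioi (0 : ℝ), uGammaMellinKernel z ν x u = Gamma z * (u : ℂ) ^ (ν - z - 1) := by
  have harg : (u : ℂ).arg ≠ Real.pi := by
    rw [arg_ofReal_of_nonneg hu.le]
    exact Real.pi_ne_zero.symm
  unfold uGammaMellinKernel
  rw [integral_const_mul, integral_cpow_mul_exp_neg_mul_Ioi hz hu, one_div, inv_cpow _ _ harg,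
    ← cpow_neg, ← mul_assoc, ← cpow_add _ _ (ofReal_ne_zero.mpr hu.ne'), mul_comm]
  ring_nf

lemma integral_norm_uGammaMellinKernel (hz : 0 < z.re) (hu : 0 < u) :
    ∫ x in Ioi (0 : ℝ), ‖uGammaMellinKernel z ν x u‖
      = Real.Gamma z.re * u ^ (ν.re - z.re - 1) := by
  have hnorm : ∀ x ∈ Ioi (0 : ℝ), ‖uGammaMellinKernel z ν x u‖
      = u ^ (ν.re - 1) * (x ^ (z.re - 1) * Real.exp (-(u * x))) := fun x hx => by
    rw [uGammaMellinKernel, norm_mul, norm_mul, norm_cpow_eq_rpow_re_of_pos hu,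
      norm_cpow_eq_rpow_re_of_pos hx, norm_exp]
    simp
  rw [setIntegral_congr_fun measurableSet_Ioi hnorm, integral_const_mul,
    Real.integral_rpow_mul_exp_neg_mul_Ioi hz hu, one_div, Real.inv_rpow hu.le,
    ← Real.rpow_neg hu.le, ← mul_assoc, ← Real.rpow_add hu, mul_comm]
  ring_nf

lemma integrable_uGammaMellinKernel (hz : 0 < z.re) (hzν : 0 < (z - ν).re) :
    Integrable (Function.uncurry (uGammaMellinKernel z ν))
      ((volume.restrict (Ioi 0)).prod (volume.restrict (Ioi 1))) := by
  rw [integrable_prod_iff' (by unfold uGammaMellinKernel; fun_prop)]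
  constructor
  · filter_upwards [ae_restrict_mem measurableSet_Ioi] with u hu
    exact (integrableOn_cpow_mul_exp_neg_mul hz (zero_lt_one.trans hu)).const_mul
      ((u : ℂ) ^ (ν - 1))
  · have hlt : ν.re - z.re - 1 < -1 := by
      rw [sub_re] at hzν
      linarith
    have hdom : IntegrableOn (fun u : ℝ => Real.Gamma z.re * u ^ (ν.re - z.re - 1)) (Ioi 1) :=
      (integrableOn_Ioi_rpow_of_lt hlt one_pos).const_mul _
    exact hdom.congr_fun (fun u hu =>
      (integral_norm_uGammaMellinKernel hz (zero_lt_one.trans hu)).symm) measurableSet_Ioi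

end uGammaMellinKernel

lemma integral_Ioi_one_cpow_sub_sub_one {z ν : ℂ} (hzν : 0 < (z - ν).re) :
    ∫ u in Ioi (1 : ℝ), (u : ℂ) ^ (ν - z - 1) = (z - ν)⁻¹ := by
  have hlt : (ν - z - 1).re < -1 := by
    simp only [sub_re, one_re] at hzν ⊢
    linarith
  rw [integral_Ioi_cpow_of_lt hlt one_pos, ofReal_one, one_cpow,
    show ν - z - 1 + 1 = -(z - ν) by ring, neg_div_neg_eq, one_div]

theorem stmt_0 (z ν : ℂ) (hz : 0 < z.re) (hzν : 0 < (z - ν).re) :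
    ∫ x in Set.Ioi (0:ℝ), (x:ℂ) ^ (-ν) * uGamma ν (x:ℂ) * (x:ℂ) ^ (z - 1)
      = Complex.Gamma z / (z - ν) := by
  calc ∫ x in Ioi (0 : ℝ), (x : ℂ) ^ (-ν) * uGamma ν x * (x : ℂ) ^ (z - 1)
      = ∫ x in Ioi (0 : ℝ), ∫ u in Ioi (1 : ℝ), uGammaMellinKernel z ν x u := by
        refine setIntegral_congr_fun measurableSet_Ioi fun x hx => ?_
        rw [cpow_neg_mul_uGamma ν hx, ← integral_mul_const]
        exact integral_congr_ae (ae_of_all _ fun u => by rw [uGammaMellinKernel]; ring)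
    _ = ∫ u in Ioi (1 : ℝ), ∫ x in Ioi (0 : ℝ), uGammaMellinKernel z ν x u :=
        integral_integral_swap (integrable_uGammaMellinKernel hz hzν)
    _ = ∫ u in Ioi (1 : ℝ), Gamma z * (u : ℂ) ^ (ν - z - 1) :=
        setIntegral_congr_fun measurableSet_Ioi fun u hu =>
          integral_uGammaMellinKernel hz (zero_lt_one.trans hu)
    _ = Gamma z / (z - ν) := by
        rw [integral_const_mul, integral_Ioi_one_cpow_sub_sub_one hzν, div_eq_mul_inv]
end

section
/- The function h(s, x) := (1/2) x^{-s/2} Γ(s/2, x) satisfies, for each fixed s and each w with Re(w) > max(0, Re(s)/2): ∫₀^∞ h(s, x) x^{w-1} dx = Γ(w)/(2w - s). -/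
open MeasureTheory Set

lemma uGamma_ofReal_eq (a : ℂ) (x : ℝ) :
    uGamma a (x:ℂ) = ∫ u in Set.Ioi x, (u:ℂ) ^ (a - 1) * Complex.exp (-(u:ℂ)) := by
  have hmp : MeasurePreserving (fun t : ℝ => x + t) volume volume :=
    measurePreserving_add_left volume x
  have hemb : MeasurableEmbedding (fun t : ℝ => x + t) :=
    (MeasurableEquiv.addLeft x).measurableEmbedding
  have hpre : (fun t : ℝ => x + t) ⁻¹' Set.Ioi x = Set.Ioi 0 := by
    ext t; simp
  rw [← hmp.setIntegral_preimage_emb hemb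
    (fun u : ℝ => (u:ℂ) ^ (a - 1) * Complex.exp (-(u:ℂ))) (Set.Ioi x), hpre, uGamma]
  refine setIntegral_congr_fun measurableSet_Ioi fun t _ => ?_
  push_cast
  ring_nf

lemma int_cpow_Ioo {u : ℝ} {r : ℂ} (hu : 0 < u) (hr : -1 < r.re) :
    ∫ x in Set.Ioo (0:ℝ) u, (x:ℂ) ^ r = (u:ℂ) ^ (r+1) / (r+1) := by
  have hr1 : r + 1 ≠ 0 := by
    intro h
    have : (r + 1).re = 0 := by rw [h]; simp
    simp only [Complex.add_re, Complex.one_re] at this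
    linarith
  rw [← integral_Ioc_eq_integral_Ioo, ← intervalIntegral.integral_of_le hu.le,
    integral_cpow (Or.inl hr), Complex.ofReal_zero, Complex.zero_cpow hr1, sub_zero]

lemma int_rpow_Ioo {u r : ℝ} (hu : 0 < u) (hr : -1 < r) :
    ∫ x in Set.Ioo (0:ℝ) u, x ^ r = u ^ (r+1) / (r+1) := by
  rw [← integral_Ioc_eq_integral_Ioo, ← intervalIntegral.integral_of_le hu.le,
    integral_rpow (Or.inl hr), Real.zero_rpow (by linarith), sub_zero]

theorem stmt_8 (s w : ℂ) (hw : max 0 (s.re / 2) < w.re) :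
    ∫ x in Set.Ioi (0:ℝ),
        (1/2 : ℂ) * (x:ℂ) ^ (-s/2) * uGamma (s/2) (x:ℂ) * (x:ℂ) ^ (w - 1)
      = Complex.Gamma w / (2*w - s) := by
  have hw0 : 0 < w.re := lt_of_le_of_lt (le_max_left _ _) hw
  have hws : s.re / 2 < w.re := lt_of_le_of_lt (le_max_right _ _) hw
  set c : ℂ := w - s/2 with hc_def
  have hs2re : (s/2).re = s.re / 2 := by
    rw [show (2:ℂ) = ((2:ℝ):ℂ) by norm_num, Complex.div_ofReal_re]
  have hcre : c.re = w.re - s.re / 2 := by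
    rw [hc_def, Complex.sub_re, hs2re]
  have hc : 0 < c.re := by rw [hcre]; linarith
  have hcne : c ≠ 0 := fun h => by simp [h] at hc
  set K : ℝ → ℂ := fun u => (u:ℂ) ^ (s/2 - 1) * Complex.exp (-(u:ℂ)) with hK_def
  set f : ℝ → ℝ → ℂ := fun x u =>
    Set.indicator (Set.Ioi x) (fun v : ℝ => (1/2 : ℂ) * (x:ℂ) ^ (c - 1) * K v) u with hf_def
  -- pointwise flip of the indicator
  have hflip : ∀ u : ℝ, (fun x : ℝ => f x u) =
      fun x : ℝ => Set.indicator (Set.Iio u)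
        (fun x : ℝ => (1/2 : ℂ) * (x:ℂ) ^ (c - 1) * K u) x := by
    intro u; funext x
    by_cases h : x < u <;>
      simp [hf_def, Set.indicator_apply, Set.mem_Ioi, Set.mem_Iio, h]
  -- norm of K
  have hKnorm : ∀ u : ℝ, 0 < u → ‖K u‖ = u ^ (s.re/2 - 1) * Real.exp (-u) := by
    intro u hu
    rw [hK_def]
    simp only [norm_mul, Complex.norm_cpow_eq_rpow_re_of_pos hu,
      Complex.norm_exp, Complex.sub_re, hs2re, Complex.one_re, Complex.neg_re,
      Complex.ofReal_re]
  -- measurability of the double integrand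
  have hmeas : AEStronglyMeasurable (Function.uncurry f)
      ((volume.restrict (Set.Ioi (0:ℝ))).prod (volume.restrict (Set.Ioi (0:ℝ)))) := by
    have huf : Function.uncurry f = Set.indicator {p : ℝ × ℝ | p.1 < p.2}
        (fun p : ℝ × ℝ => (1/2 : ℂ) * (p.1:ℂ) ^ (c - 1) * K p.2) := by
      funext p
      by_cases h : p.1 < p.2 <;>
        simp [Function.uncurry, hf_def, Set.indicator_apply, Set.mem_Ioi, h]
    rw [huf]
    refine (Measurable.indicator ?_
      (measurableSet_lt measurable_fst measurable_snd)).aestronglyMeasurable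
    refine (measurable_const.mul ((Complex.measurable_ofReal.comp measurable_fst).pow
      measurable_const)).mul ?_
    exact ((Complex.measurable_ofReal.comp measurable_snd).pow measurable_const).mul
      ((Complex.measurable_ofReal.comp measurable_snd).neg.cexp)
  -- value of the marginal norm integral
  have hmarg : ∀ u : ℝ, 0 < u →
      (∫ x in Set.Ioi (0:ℝ), ‖f x u‖) =
        (1 / (2 * c.re)) * (Real.exp (-u) * u ^ (w.re - 1)) := by
    intro u hu
    have hxeq : (fun x : ℝ => ‖f x u‖) =
        fun x : ℝ => Set.indicator (Set.Iio u)
          (fun x : ℝ => ‖(1/2 : ℂ) * (x:ℂ) ^ (c - 1) * K u‖) x := by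
      funext x
      rw [show f x u = Set.indicator (Set.Iio u)
          (fun x : ℝ => (1/2 : ℂ) * (x:ℂ) ^ (c - 1) * K u) x from congrFun (hflip u) x]
      by_cases h : x < u <;> simp [Set.indicator_apply, Set.mem_Iio, h]
    rw [hxeq, setIntegral_indicator measurableSet_Iio, Set.Ioi_inter_Iio]
    have hcong : ∀ x ∈ Set.Ioo (0:ℝ) u,
        ‖(1/2 : ℂ) * (x:ℂ) ^ (c - 1) * K u‖ = ((1/2) * ‖K u‖) * x ^ (c.re - 1) := by
      intro x hx
      rw [norm_mul, norm_mul,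
        Complex.norm_cpow_eq_rpow_re_of_pos hx.1, Complex.sub_re, Complex.one_re]
      simp only [norm_div, norm_one, norm_mul]
      norm_num
      ring
    rw [setIntegral_congr_fun measurableSet_Ioo hcong, integral_const_mul,
      int_rpow_Ioo hu (by linarith), sub_add_cancel, hKnorm u hu]
    have hru : u ^ (s.re/2 - 1) * u ^ c.re = u ^ (w.re - 1) := by
      rw [← Real.rpow_add hu]
      congr 1
      rw [hcre]; ring
    rw [← hru]
    field_simp
  -- integrability of the double integrand
  have hint : Integrable (Function.uncurry f)
      ((volume.restrict (Set.Ioi (0:ℝ))).prod (volume.restrict (Set.Ioi (0:ℝ)))) := by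
    rw [integrable_prod_iff' hmeas]
    constructor
    · filter_upwards [ae_restrict_mem measurableSet_Ioi] with u hu
      show Integrable (fun x => f x u) _
      rw [hflip u, integrable_indicator_iff measurableSet_Iio]
      rw [IntegrableOn, Measure.restrict_restrict measurableSet_Iio]
      have hIoo : Set.Iio u ∩ Set.Ioi 0 = Set.Ioo 0 u := by
        rw [Set.inter_comm, Set.Ioi_inter_Iio]
      rw [hIoo]
      have h1 : IntegrableOn (fun x : ℝ => (x:ℂ) ^ (c - 1)) (Set.Ioo 0 u) volume :=
        ((intervalIntegral.intervalIntegrable_cpow' (a := 0) (b := u) (r := c - 1)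
          (by simp only [Complex.sub_re, Complex.one_re]; linarith)).1).mono_set
          Set.Ioo_subset_Ioc_self
      exact (h1.const_mul (1/2 : ℂ)).mul_const (K u)
    · refine (((Real.GammaIntegral_convergent hw0).const_mul
        (1 / (2 * c.re))).congr ?_)
      filter_upwards [ae_restrict_mem measurableSet_Ioi] with u hu
      exact (hmarg u hu).symm
  -- rewrite the integrand as an inner integral
  have h1 : ∀ x ∈ Set.Ioi (0:ℝ),
      (1/2 : ℂ) * (x:ℂ) ^ (-s/2) * uGamma (s/2) (x:ℂ) * (x:ℂ) ^ (w - 1)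
        = ∫ u in Set.Ioi (0:ℝ), f x u := by
    intro x hx
    have hx0 : (x:ℂ) ≠ 0 := Complex.ofReal_ne_zero.mpr (ne_of_gt hx)
    have : (∫ u in Set.Ioi (0:ℝ), f x u)
        = ∫ u in Set.Ioi x, (1/2 : ℂ) * (x:ℂ) ^ (c - 1) * K u := by
      rw [hf_def]
      rw [setIntegral_indicator measurableSet_Ioi, Set.Ioi_inter_Ioi,
        max_eq_right (le_of_lt hx)]
    rw [this, integral_const_mul, uGamma_ofReal_eq]
    have hpow : (x:ℂ) ^ (-s/2) * (x:ℂ) ^ (w - 1) = (x:ℂ) ^ (c - 1) := by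
      rw [← Complex.cpow_add _ _ hx0]
      congr 1
      rw [hc_def]; ring
    calc (1/2 : ℂ) * (x:ℂ) ^ (-s/2)
          * (∫ u in Set.Ioi x, (u:ℂ) ^ (s/2 - 1) * Complex.exp (-(u:ℂ)))
          * (x:ℂ) ^ (w - 1)
        = (1/2 : ℂ) * ((x:ℂ) ^ (-s/2) * (x:ℂ) ^ (w-1))
          * (∫ u in Set.Ioi x, (u:ℂ) ^ (s/2 - 1) * Complex.exp (-(u:ℂ))) := by ring
      _ = (1/2 : ℂ) * (x:ℂ) ^ (c - 1) * ∫ u in Set.Ioi x, K u := by rw [hpow, hK_def]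
  -- inner integral after swapping
  have h2 : ∀ u ∈ Set.Ioi (0:ℝ),
      (∫ x in Set.Ioi (0:ℝ), f x u)
        = (1 / (2 * c)) * (Complex.exp (-(u:ℂ)) * (u:ℂ) ^ (w - 1)) := by
    intro u hu
    have hu0 : (u:ℂ) ≠ 0 := Complex.ofReal_ne_zero.mpr (ne_of_gt hu)
    rw [show (fun x => f x u) = fun x : ℝ => Set.indicator (Set.Iio u)
        (fun x : ℝ => (1/2 : ℂ) * (x:ℂ) ^ (c - 1) * K u) x from hflip u]
    rw [setIntegral_indicator measurableSet_Iio, Set.Ioi_inter_Iio]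
    rw [show (fun x : ℝ => (1/2 : ℂ) * (x:ℂ) ^ (c - 1) * K u)
        = fun x : ℝ => ((1/2 : ℂ) * K u) * (x:ℂ) ^ (c - 1) from funext fun x => by ring]
    rw [integral_const_mul, int_cpow_Ioo hu
      (by simp only [Complex.sub_re, Complex.one_re]; linarith), sub_add_cancel]
    have huc : (u:ℂ) ^ (s/2 - 1) * (u:ℂ) ^ c = (u:ℂ) ^ (w - 1) := by
      rw [← Complex.cpow_add _ _ hu0]
      congr 1
      rw [hc_def]; ring
    rw [hK_def, ← huc]
    field_simp
  -- put it all together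
  calc ∫ x in Set.Ioi (0:ℝ),
        (1/2 : ℂ) * (x:ℂ) ^ (-s/2) * uGamma (s/2) (x:ℂ) * (x:ℂ) ^ (w - 1)
      = ∫ x in Set.Ioi (0:ℝ), ∫ u in Set.Ioi (0:ℝ), f x u :=
        setIntegral_congr_fun measurableSet_Ioi h1
    _ = ∫ u in Set.Ioi (0:ℝ), ∫ x in Set.Ioi (0:ℝ), f x u :=
        integral_integral_swap hint
    _ = ∫ u in Set.Ioi (0:ℝ),
          (1 / (2 * c)) * (Complex.exp (-(u:ℂ)) * (u:ℂ) ^ (w - 1)) :=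
        setIntegral_congr_fun measurableSet_Ioi h2
    _ = (1 / (2 * c)) * ∫ u in Set.Ioi (0:ℝ),
          Complex.exp (-(u:ℂ)) * (u:ℂ) ^ (w - 1) := integral_const_mul _ _
    _ = (1 / (2 * c)) * Complex.GammaIntegral w := by
        congr 1
        refine setIntegral_congr_fun measurableSet_Ioi fun u _ => ?_
        rw [Complex.ofReal_exp, Complex.ofReal_neg]
    _ = Complex.Gamma w / (2*w - s) := by
        rw [← Complex.Gamma_eq_integral hw0,
          show 2*w - s = 2*c by rw [hc_def]; ring]
        field_simp
end
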